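/- Let V be a finite-dimensional real normed vector space, let J : ℝ → L(V,V) be a differentiable family with J(t) ∘ J(t) = -id for all t, and set K(t) := J'(t). Let ω : ℝ → (alternating bilinear forms on V) be a differentiable family whose derivative decomposes as ω'(t) = φ(t) + ψ(t), where φ(t) is an alternating bilinear form that is J(t)-invariant and ψ(t) is an alternating bilinear form that is J(t)-anti-invariant. Assume ω(0) is compatible with J(0), i.e. ω(0)(J(0)u, J(0)v) = ω(0)(u,v) for all u,v. Then ω(t) is compatible with J(t) for all t if and only if for all t and all u, v ∈ V one has ψ(t)(u,v) = (1/2)·( ω(t)(K(t)u, J(t)v) + ω(t)(J(t)u, K(t)v) ). -/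

import Mathlib

/-!
Differentiating the defect `ω(t)(J(t)u, J(t)v) - ω(t)(u, v)` and splitting `ω' = φ + ψ`,
the invariance of `φ` and the anti-invariance of `ψ` give `ω'(Ju, Jv) - ω'(u, v) = -2ψ(u, v)`,
so the derivative of the defect is `ω(J'u, Jv) + ω(Ju, J'v) - 2ψ(u, v)`. The defect vanishes at
`t = 0`, hence it vanishes identically iff its derivative does.
-/

open ContinuousLinearMap

section Calculus

variable {𝕜 E F G : Type*} [NontriviallyNormedField 𝕜]
  [NormedAddCommGroup E] [NormedSpace 𝕜 E] [NormedAddCommGroup F] [NormedSpace 𝕜 F]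
  [NormedAddCommGroup G] [NormedSpace 𝕜 G]

theorem HasDerivAt.clm_apply₂ {B : 𝕜 → E →L[𝕜] F →L[𝕜] G} {B' : E →L[𝕜] F →L[𝕜] G}
    {u : 𝕜 → E} {u' : E} {v : 𝕜 → F} {v' : F} {x : 𝕜}
    (hB : HasDerivAt B B' x) (hu : HasDerivAt u u' x) (hv : HasDerivAt v v' x) :
    HasDerivAt (fun y => B y (u y) (v y)) (B' (u x) (v x) + B x u' (v x) + B x (u x) v') x := by
  simpa only [add_apply] using (hB.clm_apply hu).clm_apply hv

theorem hasDerivAt_apply_apply_sub {ω : 𝕜 → E →L[𝕜] E →L[𝕜] G} {ω' : E →L[𝕜] E →L[𝕜] G}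
    {J : 𝕜 → E →L[𝕜] E} {J' : E →L[𝕜] E} {t : 𝕜}
    (hω : HasDerivAt ω ω' t) (hJ : HasDerivAt J J' t) (u v : E) :
    HasDerivAt (fun s => ω s (J s u) (J s v) - ω s u v)
      (ω' (J t u) (J t v) - ω' u v + ω t (J' u) (J t v) + ω t (J t u) (J' v)) t := by
  have hJ_apply (w : E) : HasDerivAt (fun s => J s w) (J' w) t := by
    simpa only [map_zero, add_zero] using hJ.clm_apply (hasDerivAt_const t w)
  have hω_apply : HasDerivAt (fun s => ω s u v) (ω' u v) t := by
    simpa only [map_zero, zero_apply, add_zero] using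
      hω.clm_apply₂ (hasDerivAt_const t u) (hasDerivAt_const t v)
  refine ((hω.clm_apply₂ (hJ_apply u) (hJ_apply v)).sub hω_apply).congr_deriv ?_
  abel

end Calculus

theorem forall_eq_zero_iff_of_hasDerivAt {𝕜 G : Type*} [RCLike 𝕜]
    [NormedAddCommGroup G] [NormedSpace 𝕜 G] {f f' : 𝕜 → G} {a : 𝕜}
    (hf : ∀ x, HasDerivAt f (f' x) x) (ha : f a = 0) :
    (∀ x, f x = 0) ↔ ∀ x, f' x = 0 := by
  refine ⟨fun h x => (hf x).unique ?_, fun h x => ?_⟩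
  · simpa only [funext h] using hasDerivAt_const x (0 : G)
  · rw [← ha]
    exact is_const_of_deriv_eq_zero (fun y => (hf y).differentiableAt)
      (fun y => (hf y).deriv.trans (h y)) x a

theorem add_apply_apply_sub_of_invariant_of_antiInvariant {𝕜 E : Type*}
    [NontriviallyNormedField 𝕜] [NormedAddCommGroup E] [NormedSpace 𝕜 E]
    {J : E →L[𝕜] E} {φ ψ : E →L[𝕜] E →L[𝕜] 𝕜}
    (hφ : ∀ u v, φ (J u) (J v) = φ u v) (hψ : ∀ u v, ψ (J u) (J v) = -ψ u v) (u v : E) :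
    (φ + ψ) (J u) (J v) - (φ + ψ) u v = -2 * ψ u v := by
  simp only [add_apply, hφ, hψ]
  ring

theorem statement2_general {V : Type*} [NormedAddCommGroup V] [NormedSpace ℝ V]
    (J : ℝ → V →L[ℝ] V) (hJdiff : Differentiable ℝ J)
    (ω φ ψ : ℝ → V →L[ℝ] V →L[ℝ] ℝ)
    (hωdiff : Differentiable ℝ ω)
    (hφinv : ∀ (t : ℝ) (u v : V), φ t (J t u) (J t v) = φ t u v)
    (hψanti : ∀ (t : ℝ) (u v : V), ψ t (J t u) (J t v) = -(ψ t u v))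
    (hderiv : ∀ t : ℝ, deriv ω t = φ t + ψ t)
    (hcompat0 : ∀ u v : V, ω 0 (J 0 u) (J 0 v) = ω 0 u v) :
    (∀ (t : ℝ) (u v : V), ω t (J t u) (J t v) = ω t u v) ↔
      (∀ (t : ℝ) (u v : V), ψ t u v =
        (1/2) * (ω t (deriv J t u) (J t v) + ω t (J t u) (deriv J t v))) := by
  have hdefect (u v : V) (t : ℝ) : HasDerivAt (fun s => ω s (J s u) (J s v) - ω s u v)
      (ω t (deriv J t u) (J t v) + ω t (J t u) (deriv J t v) - 2 * ψ t u v) t := by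
    have hω : HasDerivAt ω (φ t + ψ t) t := by
      simpa only [hderiv t] using (hωdiff t).hasDerivAt (f := ω)
    have hJ : HasDerivAt J (deriv J t) t := (hJdiff t).hasDerivAt (f := J)
    refine (hasDerivAt_apply_apply_sub hω hJ u v).congr_deriv ?_
    rw [add_apply_apply_sub_of_invariant_of_antiInvariant (hφinv t) (hψanti t)]
    ring
  have key (u v : V) : (∀ t, ω t (J t u) (J t v) - ω t u v = 0) ↔
      ∀ t, ψ t u v = (1/2) * (ω t (deriv J t u) (J t v) + ω t (J t u) (deriv J t v)) :=
    (forall_eq_zero_iff_of_hasDerivAt (hdefect u v) (sub_eq_zero.2 (hcompat0 u v))).trans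
      (forall_congr' fun t => by constructor <;> intro h <;> linarith)
  simp only [sub_eq_zero] at key
  exact ⟨fun h t u v => (key u v).1 (fun s => h s u v) t,
    fun h t u v => (key u v).2 (fun s => h s u v) t⟩

/-- Lemma 4.3: compatibility of a varying Kähler form with a varying
almost complex structure is preserved iff the `(2,0)+(0,2)` part of the variation
of `ω` is determined by the variation of `J`. -/
theorem statement2 {V : Type*} [NormedAddCommGroup V] [NormedSpace ℝ V]
    [FiniteDimensional ℝ V]
    (J : ℝ → V →L[ℝ] V) (hJdiff : Differentiable ℝ J)
    (hJsq : ∀ t : ℝ, (J t).comp (J t) = -(ContinuousLinearMap.id ℝ V))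
    (ω φ ψ : ℝ → V →L[ℝ] V →L[ℝ] ℝ)
    (hωdiff : Differentiable ℝ ω)
    (hωalt : ∀ (t : ℝ) (u v : V), ω t u v = -(ω t v u))
    (hφalt : ∀ (t : ℝ) (u v : V), φ t u v = -(φ t v u))
    (hψalt : ∀ (t : ℝ) (u v : V), ψ t u v = -(ψ t v u))
    (hφinv : ∀ (t : ℝ) (u v : V), φ t (J t u) (J t v) = φ t u v)
    (hψanti : ∀ (t : ℝ) (u v : V), ψ t (J t u) (J t v) = -(ψ t u v))
    (hderiv : ∀ t : ℝ, deriv ω t = φ t + ψ t)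
    (hcompat0 : ∀ u v : V, ω 0 (J 0 u) (J 0 v) = ω 0 u v) :
    (∀ (t : ℝ) (u v : V), ω t (J t u) (J t v) = ω t u v) ↔
      (∀ (t : ℝ) (u v : V), ψ t u v =
        (1/2) * (ω t (deriv J t u) (J t v) + ω t (J t u) (deriv J t v))) :=
  statement2_general J hJdiff ω φ ψ hωdiff hφinv hψanti hderiv hcompat0
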